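/- (Elliptic key case: sup norm against Hölder seminorm and L^p norm.) Let l > 0 be noninteger. There is a constant C = C(N, l, p) > 0 such that for every bounded continuous function u : ℝ^N → ℝ with ⟨u⟩^{(l)} < ∞ and ‖u‖_p < ∞, one has sup_{ℝ^N} |u| ≤ C (⟨u⟩^{(l)})^{N/(pl+N)} (‖u‖_p)^{pl/(pl+N)}. -/

import Mathlib

/-
Averaging `|u x| ≤ |Δ_h^k u(x)| + ∑_{j=1}^k C(k,j) |u(x + j h)|` over `h` in the ball `B_r`, the
difference term is at most `⟨u⟩^{(l)} r^l`, and by Hölder's inequality each shifted term has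
average at most `|B_r|^{-1/p} ‖u‖_p`, because `h ↦ u(x + j h)` has `L^p` norm at most `‖u‖_p`.
Hence `|u x| ≤ ⟨u⟩^{(l)} r^l + 2^k |B_1|^{-1/p} ‖u‖_p r^{-N/p}` for every `r > 0`, and the choice
of `r` balancing the two terms gives the claim.
-/

open MeasureTheory Finset ENNReal

noncomputable def fdiffE {N : ℕ} (u : EuclideanSpace ℝ (Fin N) → ℝ) (k : ℕ)
    (h x : EuclideanSpace ℝ (Fin N)) : ℝ :=
  ∑ i ∈ Finset.range (k + 1), (-1 : ℝ) ^ (k - i) * (k.choose i : ℝ) * u (x + (i : ℝ) • h)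

noncomputable def semiE {N : ℕ} (u : EuclideanSpace ℝ (Fin N) → ℝ) (l : ℝ) (k : ℕ) : ℝ≥0∞ :=
  ⨆ (x : EuclideanSpace ℝ (Fin N)) (h : EuclideanSpace ℝ (Fin N)) (_ : h ≠ 0),
    ENNReal.ofReal (|fdiffE u k h x| / ‖h‖ ^ l)

noncomputable def lpE {N : ℕ} (u : EuclideanSpace ℝ (Fin N) → ℝ) (p : ℝ) : ℝ≥0∞ :=
  (∫⁻ x : EuclideanSpace ℝ (Fin N), ENNReal.ofReal (|u x| ^ p)) ^ (1 / p)

noncomputable def normE {N : ℕ} (u : EuclideanSpace ℝ (Fin N) → ℝ) (l : ℝ) : ℝ≥0∞ :=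
  (⨆ x : EuclideanSpace ℝ (Fin N), ENNReal.ofReal |u x|) + semiE u l (⌊l⌋₊ + 1)

namespace Real

theorem le_two_mul_rpow_mul_rpow_of_forall_le_add_of_pos {l θ M A B : ℝ} (hl : 0 < l) (hθ : 0 ≤ θ)
    (hA : 0 < A) (hB : 0 < B) (H : ∀ r : ℝ, 0 < r → M ≤ A * r ^ l + B * r ^ (-θ)) :
    M ≤ 2 * A ^ (θ / (l + θ)) * B ^ (l / (l + θ)) := by
  have ha : θ / (l + θ) = 1 - l / (l + θ) := by field_simp; ring
  have hb : l / (l + θ) = 1 - θ / (l + θ) := by field_simp; ring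
  -- the minimizer `r = (B / A) ^ (1 / (l + θ))` balances the two terms
  have h := H ((B / A) ^ (1 / (l + θ))) (by positivity)
  rw [← rpow_mul (by positivity), ← rpow_mul (by positivity), div_rpow hB.le hA.le,
    div_rpow hB.le hA.le] at h
  have h1 : A * (B ^ (1 / (l + θ) * l) / A ^ (1 / (l + θ) * l)) =
      A ^ (θ / (l + θ)) * B ^ (l / (l + θ)) := by
    rw [show 1 / (l + θ) * l = l / (l + θ) by ring, ha, rpow_sub hA, rpow_one]
    field_simp
  have h2 : B * (B ^ (1 / (l + θ) * -θ) / A ^ (1 / (l + θ) * -θ)) =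
      A ^ (θ / (l + θ)) * B ^ (l / (l + θ)) := by
    rw [show 1 / (l + θ) * -θ = -(θ / (l + θ)) by ring, rpow_neg hB.le, rpow_neg hA.le, hb,
      rpow_sub hB, rpow_one]
    field_simp
  linarith

theorem le_two_mul_rpow_mul_rpow_of_forall_le_add {l θ M A B : ℝ} (hl : 0 < l) (hθ : 0 ≤ θ)
    (hA : 0 ≤ A) (hB : 0 ≤ B) (H : ∀ r : ℝ, 0 < r → M ≤ A * r ^ l + B * r ^ (-θ)) :
    M ≤ 2 * A ^ (θ / (l + θ)) * B ^ (l / (l + θ)) := by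
  have hε : ∀ ε : ℝ, 0 < ε → M ≤ 2 * (A + ε) ^ (θ / (l + θ)) * (B + ε) ^ (l / (l + θ)) := by
    intro ε hε
    refine le_two_mul_rpow_mul_rpow_of_forall_le_add_of_pos hl hθ (by linarith) (by linarith)
      fun r hr => (H r hr).trans ?_
    gcongr <;> first | positivity | linarith
  have hcont : Continuous fun ε : ℝ => 2 * (A + ε) ^ (θ / (l + θ)) * (B + ε) ^ (l / (l + θ)) :=
    (continuous_const.mul ((continuous_rpow_const (by positivity)).comp
      (continuous_const_add A))).mul
      ((continuous_rpow_const (by positivity)).comp (continuous_const_add B))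
  have hlim := hcont.continuousWithinAt (s := Set.Ioi 0) (x := 0)
  rw [ContinuousWithinAt, add_zero, add_zero] at hlim
  exact ge_of_tendsto hlim (eventually_nhdsWithin_of_forall hε)

end Real

section HaarDilation

variable {E F : Type*} [NormedAddCommGroup E] [NormedSpace ℝ E] [FiniteDimensional ℝ E]
  [MeasurableSpace E] [BorelSpace E] [NormedAddCommGroup F] (μ : Measure E) [μ.IsAddHaarMeasure]

theorem eLpNorm_comp_add_smul_le {f : E → F} (hf : AEStronglyMeasurable f μ) (p : ℝ≥0∞)
    (x : E) {c : ℝ} (hc : 1 ≤ c) :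
    eLpNorm (fun h => f (x + c • h)) p μ ≤ eLpNorm f p μ := by
  have hc0 : c ≠ 0 := (zero_lt_one.trans_le hc).ne'
  have htr := measurePreserving_add_left μ x
  have hg : AEStronglyMeasurable (fun y => f (x + y)) μ := hf.comp_measurePreserving htr
  have hshrink : ENNReal.ofReal |(c ^ Module.finrank ℝ E)⁻¹| • μ ≤ μ := by
    refine Measure.le_iff'.2 fun s => ?_
    rw [Measure.smul_apply, smul_eq_mul]
    refine mul_le_of_le_one_left (by positivity) (ofReal_le_one.2 ?_)
    rw [abs_of_nonneg (by positivity)]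
    exact inv_le_one_of_one_le₀ (one_le_pow₀ hc)
  calc eLpNorm (fun h => f (x + c • h)) p μ
      = eLpNorm (fun y => f (x + y)) p (Measure.map (c • ·) μ) := by
        have hm : AEStronglyMeasurable (fun y => f (x + y)) (Measure.map (c • ·) μ) := by
          rw [Measure.map_addHaar_smul μ hc0]
          exact hg.smul_measure _
        exact (eLpNorm_map_measure hm (measurable_const_smul c).aemeasurable).symm
    _ ≤ eLpNorm (fun y => f (x + y)) p μ := by
        rw [Measure.map_addHaar_smul μ hc0]
        exact eLpNorm_mono_measure _ hshrink
    _ = eLpNorm f p μ := eLpNorm_comp_measurePreserving hf htr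

end HaarDilation

theorem setLIntegral_enorm_le_eLpNorm_mul_measure_rpow {α ε : Type*} [MeasurableSpace α]
    [TopologicalSpace ε] [ContinuousENorm ε] {μ : Measure α} {f : α → ε} {s : Set α} {p : ℝ≥0∞}
    (hp : 1 ≤ p) (hf : AEStronglyMeasurable f (μ.restrict s)) :
    ∫⁻ y in s, ‖f y‖ₑ ∂μ ≤ eLpNorm f p μ * μ s ^ (1 - 1 / p.toReal) := by
  have := eLpNorm_le_eLpNorm_mul_rpow_measure_univ hp hf
  rw [eLpNorm_one_eq_lintegral_enorm (f := f), Measure.restrict_apply_univ, toReal_one,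
    div_one] at this
  exact this.trans (by gcongr; exact Measure.restrict_le_self)

theorem sum_range_choose_succ_le_two_pow (k : ℕ) :
    ∑ j ∈ range k, (k.choose (j + 1) : ℝ≥0∞) ≤ 2 ^ k := by
  have h := Finset.sum_range_succ' (fun i => k.choose i) k
  rw [Nat.sum_range_choose] at h
  exact_mod_cast (h ▸ Nat.le_add_right _ _ : ∑ j ∈ range k, k.choose (j + 1) ≤ 2 ^ k)

section Euclidean

variable {N : ℕ} (u : EuclideanSpace ℝ (Fin N) → ℝ)

theorem fdiffE_zero_step {k : ℕ} (hk : k ≠ 0) (x : EuclideanSpace ℝ (Fin N)) :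
    fdiffE u k 0 x = 0 := by
  have h := add_pow (1 : ℝ) (-1) k
  simp only [one_pow, one_mul, add_neg_cancel, zero_pow hk] at h
  simp only [fdiffE, smul_zero, add_zero, ← Finset.sum_mul]
  rw [← h, zero_mul]

theorem enorm_fdiffE_le_semiE_mul {k : ℕ} (hk : k ≠ 0) (l : ℝ)
    (h x : EuclideanSpace ℝ (Fin N)) :
    ‖fdiffE u k h x‖ₑ ≤ semiE u l k * ENNReal.ofReal (‖h‖ ^ l) := by
  rcases eq_or_ne h 0 with rfl | hh
  · simp [fdiffE_zero_step u hk]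
  have hpos : 0 < ‖h‖ ^ l := Real.rpow_pos_of_pos (norm_pos_iff.2 hh) l
  have hquot : ENNReal.ofReal (|fdiffE u k h x| / ‖h‖ ^ l) ≤ semiE u l k :=
    le_iSup₂_of_le x h (le_iSup_of_le hh le_rfl)
  calc ‖fdiffE u k h x‖ₑ
      = ENNReal.ofReal (|fdiffE u k h x| / ‖h‖ ^ l) * ENNReal.ofReal (‖h‖ ^ l) := by
        rw [← ofReal_mul (by positivity), div_mul_cancel₀ _ hpos.ne', Real.enorm_eq_ofReal_abs]
    _ ≤ semiE u l k * ENNReal.ofReal (‖h‖ ^ l) := by gcongr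

theorem enorm_le_enorm_fdiffE_add_sum (k : ℕ) (h x : EuclideanSpace ℝ (Fin N)) :
    ‖u x‖ₑ ≤ ‖fdiffE u k h x‖ₑ +
      ∑ j ∈ range k, (k.choose (j + 1) : ℝ≥0∞) * ‖u (x + ((j + 1 : ℕ) : ℝ) • h)‖ₑ := by
  set t : ℕ → ℝ := fun i => (-1 : ℝ) ^ (k - i) * (k.choose i : ℝ) * u (x + (i : ℝ) • h)
  have hsplit : fdiffE u k h x = ∑ j ∈ range k, t (j + 1) + t 0 := Finset.sum_range_succ' t k
  have ht0 : ‖u x‖ₑ = ‖t 0‖ₑ := by simp [t, enorm_mul, enorm_pow]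
  have ht : ∀ j, ‖t (j + 1)‖ₑ = (k.choose (j + 1) : ℝ≥0∞) * ‖u (x + ((j + 1 : ℕ) : ℝ) • h)‖ₑ := by
    intro j; simp [t, enorm_mul, enorm_pow]
  calc ‖u x‖ₑ = ‖fdiffE u k h x - ∑ j ∈ range k, t (j + 1)‖ₑ := by
        rw [ht0, hsplit, add_sub_cancel_left]
    _ ≤ ‖fdiffE u k h x‖ₑ + ∑ j ∈ range k, ‖t (j + 1)‖ₑ :=
        enorm_sub_le.trans (by gcongr; exact enorm_sum_le _ _)
    _ = _ := by simp only [ht]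

theorem lpE_eq_eLpNorm {p : ℝ} (hp : 0 < p) :
    lpE u p = eLpNorm u (ENNReal.ofReal p) volume := by
  rw [eLpNorm_eq_eLpNorm' (f := u) (by simpa using hp) ofReal_ne_top, eLpNorm'_eq_lintegral_enorm,
    toReal_ofReal hp.le, lpE]
  congr 1
  refine lintegral_congr fun x => ?_
  rw [Real.enorm_eq_ofReal_abs, ofReal_rpow_of_nonneg (abs_nonneg _) hp.le]

end Euclidean

section BallAverage

open Metric

variable {N : ℕ} {u : EuclideanSpace ℝ (Fin N) → ℝ}

theorem enorm_le_semiE_mul_add_eLpNorm_mul (hu : Continuous u) {k : ℕ} (hk : k ≠ 0) {l : ℝ}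
    (hl : 0 ≤ l) {p : ℝ≥0∞} (hp : 1 ≤ p) (x : EuclideanSpace ℝ (Fin N)) {r : ℝ} (hr : 0 < r) :
    ‖u x‖ₑ ≤ semiE u l k * ENNReal.ofReal (r ^ l) + 2 ^ k * eLpNorm u p volume *
      volume (ball (0 : EuclideanSpace ℝ (Fin N)) r) ^ (-(1 / p.toReal)) := by
  set B := ball (0 : EuclideanSpace ℝ (Fin N)) r
  set V := volume B
  have hV0 : V ≠ 0 := (measure_ball_pos volume 0 hr).ne'
  have hVtop : V ≠ ⊤ := measure_ball_lt_top.ne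
  set A := semiE u l k * ENNReal.ofReal (r ^ l)
  set Λ := eLpNorm u p volume
  set g : ℕ → EuclideanSpace ℝ (Fin N) → ℝ≥0∞ := fun j h => ‖u (x + ((j + 1 : ℕ) : ℝ) • h)‖ₑ
  have hcont : ∀ c : ℝ, Continuous fun h : EuclideanSpace ℝ (Fin N) => u (x + c • h) := fun c =>
    hu.comp (continuous_const.add (continuous_const_smul c))
  have hpoint : ∀ h ∈ B, ‖u x‖ₑ ≤ A + ∑ j ∈ range k, (k.choose (j + 1) : ℝ≥0∞) * g j h := by
    intro h hh
    refine (enorm_le_enorm_fdiffE_add_sum u k h x).trans (add_le_add_left ?_ _)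
    exact (enorm_fdiffE_le_semiE_mul u hk l h x).trans <| mul_le_mul_right (ofReal_le_ofReal <|
      Real.rpow_le_rpow (norm_nonneg h) (mem_ball_zero_iff.1 hh).le hl) _
  have hg : ∀ j, ∫⁻ h in B, g j h ≤ Λ * V ^ (1 - 1 / p.toReal) := by
    intro j
    refine (setLIntegral_enorm_le_eLpNorm_mul_measure_rpow hp
      (hcont _).aestronglyMeasurable).trans ?_
    gcongr
    exact eLpNorm_comp_add_smul_le volume hu.aestronglyMeasurable p x
      (by exact_mod_cast Nat.succ_pos j)
  have hint : ‖u x‖ₑ * V ≤ (A + 2 ^ k * Λ * V ^ (-(1 / p.toReal))) * V :=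
    calc ‖u x‖ₑ * V = ∫⁻ _ in B, ‖u x‖ₑ := (setLIntegral_const _ _).symm
      _ ≤ ∫⁻ h in B, (A + ∑ j ∈ range k, (k.choose (j + 1) : ℝ≥0∞) * g j h) :=
          setLIntegral_mono' measurableSet_ball hpoint
      _ = A * V + ∑ j ∈ range k, (k.choose (j + 1) : ℝ≥0∞) * ∫⁻ h in B, g j h := by
          rw [lintegral_add_left measurable_const, setLIntegral_const,
            lintegral_finsetSum' _ fun j _ => ((hcont _).enorm.measurable.const_mul _).aemeasurable]
          simp only [lintegral_const_mul' _ _ (natCast_ne_top _)]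
          rfl
      _ ≤ A * V + ∑ j ∈ range k, (k.choose (j + 1) : ℝ≥0∞) * (Λ * V ^ (1 - 1 / p.toReal)) := by
          gcongr with j; exact hg j
      _ ≤ A * V + 2 ^ k * (Λ * V ^ (1 - 1 / p.toReal)) := by
          rw [← Finset.sum_mul]; gcongr; exact sum_range_choose_succ_le_two_pow k
      _ = (A + 2 ^ k * Λ * V ^ (-(1 / p.toReal))) * V := by
          rw [sub_eq_add_neg, rpow_add _ _ hV0 hVtop, rpow_one]; ring
  exact (ENNReal.mul_le_mul_iff_left hV0 hVtop).1 hint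

theorem abs_le_semiE_mul_rpow_add_lpE_mul_rpow (hu : Continuous u) {k : ℕ} (hk : k ≠ 0) {l : ℝ}
    (hl : 0 ≤ l) {p : ℝ} (hp : 1 ≤ p) (hsem : semiE u l k ≠ ⊤) (hlp : lpE u p ≠ ⊤)
    (x : EuclideanSpace ℝ (Fin N)) {r : ℝ} (hr : 0 < r) :
    |u x| ≤ (semiE u l k).toReal * r ^ l +
      2 ^ k * (volume (ball (0 : EuclideanSpace ℝ (Fin N)) 1)).toReal ^ (-(1 / p)) *
        (lpE u p).toReal * r ^ (-(N / p)) := by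
  have hp0 : 0 < p := zero_lt_one.trans_le hp
  have h := enorm_le_semiE_mul_add_eLpNorm_mul hu hk hl (p := ENNReal.ofReal p)
    (by simpa using hp) x hr
  rw [toReal_ofReal hp0.le, ← lpE_eq_eLpNorm u hp0] at h
  have hball : (volume (ball (0 : EuclideanSpace ℝ (Fin N)) r) ^ (-(1 / p))).toReal =
      (volume (ball (0 : EuclideanSpace ℝ (Fin N)) 1)).toReal ^ (-(1 / p)) * r ^ (-(N / p)) := by
    rw [← toReal_rpow, Measure.addHaar_ball_of_pos volume 0 hr, finrank_euclideanSpace_fin,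
      toReal_mul, toReal_ofReal (by positivity), Real.mul_rpow (by positivity) toReal_nonneg,
      ← Real.rpow_natCast, ← Real.rpow_mul hr.le, mul_comm]
    ring_nf
  have hV : volume (ball (0 : EuclideanSpace ℝ (Fin N)) r) ^ (-(1 / p)) ≠ ⊤ :=
    rpow_ne_top_of_ne_zero (measure_ball_pos volume 0 hr).ne' measure_ball_lt_top.ne
  have h' := toReal_mono (by finiteness) h
  rw [toReal_add (by finiteness) (by finiteness), toReal_mul, toReal_mul, toReal_mul, hball,
    toReal_ofReal (by positivity), toReal_enorm, Real.norm_eq_abs] at h'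
  calc |u x| ≤ _ := h'
    _ = _ := by rw [toReal_pow, toReal_ofNat]; ring

end BallAverage

theorem elliptic_sup_interpolation_general (N : ℕ) (p : ℝ) (hp : 1 < p)
    (l : ℝ) (hl : 0 < l) :
    ∃ C : ℝ, 0 < C ∧
      ∀ u : EuclideanSpace ℝ (Fin N) → ℝ, Continuous u →
        Bornology.IsBounded (Set.range u) →
        semiE u l ⌈l⌉₊ < ⊤ → lpE u p < ⊤ →
        ∀ x : EuclideanSpace ℝ (Fin N),
          |u x| ≤ C * (semiE u l ⌈l⌉₊).toReal ^ ((N : ℝ) / (p * l + N)) *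
            (lpE u p).toReal ^ (p * l / (p * l + N)) := by
  have hball : 0 < (volume (Metric.ball (0 : EuclideanSpace ℝ (Fin N)) 1)).toReal :=
    toReal_pos (Metric.measure_ball_pos volume 0 one_pos).ne' measure_ball_lt_top.ne
  set K := 2 ^ ⌈l⌉₊ * (volume (Metric.ball (0 : EuclideanSpace ℝ (Fin N)) 1)).toReal ^ (-(1 / p))
  refine ⟨2 * K ^ (p * l / (p * l + N)), by positivity, fun u hu _ hsem hlp x => ?_⟩
  have hbound := Real.le_two_mul_rpow_mul_rpow_of_forall_le_add (θ := N / p)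
    (B := K * (lpE u p).toReal) hl (by positivity) toReal_nonneg (by positivity) fun r hr =>
      (abs_le_semiE_mul_rpow_add_lpE_mul_rpow hu (Nat.ceil_pos.2 hl).ne' hl.le hp.le hsem.ne
        hlp.ne x hr).trans_eq (by ring)
  have hexp₁ : (N / p) / (l + N / p) = (N : ℝ) / (p * l + N) := by field_simp
  have hexp₂ : l / (l + N / p) = p * l / (p * l + N) := by field_simp
  rw [hexp₁, hexp₂, Real.mul_rpow (by positivity) toReal_nonneg] at hbound
  exact hbound.trans_eq (by ring)

/-- Elliptic key case: sup norm against Hölder seminorm and `L^p` norm. -/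
theorem elliptic_sup_interpolation (N : ℕ) (hN : 1 ≤ N) (p : ℝ) (hp : 1 < p)
    (l : ℝ) (hl : 0 < l) (hlni : ∀ n : ℤ, (n : ℝ) ≠ l) :
    ∃ C : ℝ, 0 < C ∧
      ∀ u : EuclideanSpace ℝ (Fin N) → ℝ, Continuous u →
        Bornology.IsBounded (Set.range u) →
        semiE u l ⌈l⌉₊ < ⊤ → lpE u p < ⊤ →
        ∀ x : EuclideanSpace ℝ (Fin N),
          |u x| ≤ C * (semiE u l ⌈l⌉₊).toReal ^ ((N : ℝ) / (p * l + N)) *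
            (lpE u p).toReal ^ (p * l / (p * l + N)) :=
  elliptic_sup_interpolation_general N p hp l hl
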